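/- Let S be a subring of a commutative ring R and I an ideal of S. A polynomial f ∈ (T_n(R))[x] satisfies f(C) ∈ T_n(I) for all C ∈ T_n(S) (right substitution) if and only if for all 1 ≤ i ≤ j ≤ n, the scalar polynomial f_{ij} ∈ R[x] (formed from the (i,j)-entries of the coefficients of f) satisfies f_{ij}(C) ∈ T_{n−j+1}(I) for all C ∈ T_{n−j+1}(S). -/

import Mathlib

/-!
For any matrix `C`, `f(C)_{ab} = ∑_l f_{al}(C)_{lb}`. When `C` is upper triangular, the entry
`(l, b)` of a polynomial in `C` only involves the trailing block `C_{≥l}` of size `n - l`, and the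
terms with `l < a` vanish because the coefficients of `f` are upper triangular; this gives `⇐`.

For `⇒`, argue by descending induction on `j`. Given `D ∈ T_{n-j}(S)` and `a ≤ b`, put the trailing
block `D_{≥a}` at position `j` of an otherwise zero `n × n` matrix `C`. Then `f(C)_{i, j+b-a}` is
`f_{ij}(D)_{ab}` plus terms `f_{il}(C)_{l, j+b-a}`: those with `l < j` vanish since row `l` of `C`
is zero, and those with `l > j` lie in `I` by induction.
-/

open Polynomial Function

namespace Fin

def natAddLE {m n : ℕ} (l : ℕ) (h : l + m ≤ n) : Fin m → Fin n := fun p => ⟨l + p, by omega⟩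

@[simp]
theorem coe_natAddLE {m n l : ℕ} (h : l + m ≤ n) (p : Fin m) : (natAddLE l h p : ℕ) = l + p :=
  rfl

theorem strictMono_natAddLE {m n : ℕ} (l : ℕ) (h : l + m ≤ n) : StrictMono (natAddLE l h) :=
  fun _ _ hpq => by simp only [Fin.lt_def, coe_natAddLE] at hpq ⊢; omega

end Fin

namespace Matrix

section ExtendByZero

variable {ι κ α : Type*} [Zero α]

theorem BlockTriangular.submatrix_of_strictMono [LinearOrder ι] [LinearOrder κ] {e : κ → ι}
    (he : StrictMono e) {C : Matrix ι ι α} (hC : C.BlockTriangular id) :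
    (C.submatrix e e).BlockTriangular id :=
  fun _ _ h => hC (he h)

noncomputable def extendByZero (e : κ → ι) (A : Matrix κ κ α) : Matrix ι ι α :=
  of fun u v => extend e (fun p => extend e (A p) 0 v) 0 u

variable {e : κ → ι} (A : Matrix κ κ α)

theorem extendByZero_apply_apply (he : Injective e) (p q : κ) :
    extendByZero e A (e p) (e q) = A p q := by
  simp [extendByZero, he.extend_apply]

theorem extendByZero_apply_of_notMem_range_left {u : ι} (hu : u ∉ Set.range e) (v : ι) :
    extendByZero e A u v = 0 := by
  simp [extendByZero, extend_apply' _ _ _ hu]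

theorem extendByZero_apply_of_notMem_range_right (he : Injective e) (u : ι) {v : ι}
    (hv : v ∉ Set.range e) : extendByZero e A u v = 0 := by
  by_cases hu : u ∈ Set.range e
  · obtain ⟨p, rfl⟩ := hu
    simp [extendByZero, he.extend_apply, extend_apply' _ _ _ hv]
  · exact extendByZero_apply_of_notMem_range_left A hu v

theorem submatrix_extendByZero (he : Injective e) : (extendByZero e A).submatrix e e = A := by
  ext p q
  exact extendByZero_apply_apply A he p q

theorem extendByZero_apply_mem {S : Set α} (hS : 0 ∈ S) (hA : ∀ p q, A p q ∈ S) (he : Injective e)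
    (u v : ι) : extendByZero e A u v ∈ S := by
  by_cases hu : u ∈ Set.range e
  · by_cases hv : v ∈ Set.range e
    · obtain ⟨⟨p, rfl⟩, ⟨q, rfl⟩⟩ := And.intro hu hv
      simpa [extendByZero_apply_apply A he] using hA p q
    · simpa [extendByZero_apply_of_notMem_range_right A he u hv] using hS
  · simpa [extendByZero_apply_of_notMem_range_left A hu v] using hS

theorem BlockTriangular.extendByZero [LinearOrder ι] [LinearOrder κ] (he : StrictMono e)
    {A : Matrix κ κ α} (hA : A.BlockTriangular id) :
    (Matrix.extendByZero e A).BlockTriangular id := by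
  intro u v hvu
  by_cases hu : u ∈ Set.range e
  · by_cases hv : v ∈ Set.range e
    · obtain ⟨⟨p, rfl⟩, ⟨q, rfl⟩⟩ := And.intro hu hv
      rw [extendByZero_apply_apply A he.injective]
      exact hA (he.lt_iff_lt.mp hvu)
    · exact extendByZero_apply_of_notMem_range_right A he.injective _ hv
  · exact extendByZero_apply_of_notMem_range_left A hu v

end ExtendByZero

variable {R : Type*} [CommSemiring R] {ι κ : Type*} [Fintype ι] [DecidableEq ι] [Fintype κ]
  [DecidableEq κ]

theorem BlockTriangular.aeval {α : Type*} [LinearOrder α] {b : ι → α} {C : Matrix ι ι R}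
    (hC : C.BlockTriangular b) (g : R[X]) : (aeval C g).BlockTriangular b := by
  rw [aeval_eq_sum_range]
  exact sum_mem (S := blockTriangularSubalgebra R R b) fun k _ =>
    Subalgebra.smul_mem _ (hC.pow k) _

theorem BlockTriangular.eval {α : Type*} [LinearOrder α] {b : ι → α} {C : Matrix ι ι R}
    {f : (Matrix ι ι R)[X]} (hf : ∀ k, (f.coeff k).BlockTriangular b) (hC : C.BlockTriangular b) :
    (f.eval C).BlockTriangular b := by
  rw [eval_eq_sum, Polynomial.sum_def]
  exact sum_mem (S := blockTriangularSubsemiring R b) fun k _ => mul_mem (hf k) (hC.pow k)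

theorem aeval_apply_eq_zero_of_row_eq_zero {C : Matrix ι ι R} {u v : ι} (hrow : ∀ w, C u w = 0)
    (huv : u ≠ v) (g : R[X]) : aeval C g u v = 0 := by
  have hpow : ∀ k, (C ^ k) u v = 0
    | 0 => one_apply_ne huv
    | k + 1 => by simp [pow_succ', mul_apply, hrow]
  simp [aeval_eq_sum_range, sum_apply, hpow]

section Submatrix

variable {C : Matrix ι ι R} {e : κ → ι} (he : Injective e)
  (hC : ∀ p w, w ∉ Set.range e → C (e p) w = 0)
include he hC

theorem submatrix_pow_of_apply_eq_zero (k : ℕ) : (C ^ k).submatrix e e = C.submatrix e e ^ k := by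
  induction k with
  | zero => exact submatrix_one e he
  | succ k ih =>
    ext p q
    rw [pow_succ', pow_succ', submatrix_apply, mul_apply, mul_apply, ← ih]
    exact (Fintype.sum_of_injective e he (fun r => C (e p) (e r) * (C ^ k) (e r) (e q))
      (fun w => C (e p) w * (C ^ k) w (e q)) (fun w hw => by rw [hC p w hw, zero_mul])
      fun _ => rfl).symm

theorem aeval_apply_apply_eq_aeval_submatrix (g : R[X]) (p q : κ) :
    aeval C g (e p) (e q) = aeval (C.submatrix e e) g p q := by
  simp [aeval_eq_sum_range, sum_apply, ← submatrix_pow_of_apply_eq_zero he hC]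

end Submatrix

theorem aeval_extendByZero_apply_apply {e : κ → ι} (he : Injective e) (A : Matrix κ κ R)
    (g : R[X]) (p q : κ) : aeval (extendByZero e A) g (e p) (e q) = aeval A g p q := by
  rw [aeval_apply_apply_eq_aeval_submatrix he
    (fun _ _ hw => extendByZero_apply_of_notMem_range_right A he _ hw), submatrix_extendByZero A he]

theorem BlockTriangular.aeval_apply_natAddLE {n m l : ℕ} {C : Matrix (Fin n) (Fin n) R}
    (hC : C.BlockTriangular id) (h : l + m = n) (g : R[X]) (p q : Fin m) :
    Polynomial.aeval C g (Fin.natAddLE l h.le p) (Fin.natAddLE l h.le q) =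
      Polynomial.aeval (C.submatrix (Fin.natAddLE l h.le) (Fin.natAddLE l h.le)) g p q := by
  refine aeval_apply_apply_eq_aeval_submatrix (Fin.strictMono_natAddLE l h.le).injective
    (fun p w hw => hC ?_) g p q
  simp only [id, Fin.lt_def, Fin.coe_natAddLE]
  by_contra! hlw
  exact hw ⟨⟨w - l, by omega⟩, Fin.ext (by simp; omega)⟩

end Matrix

namespace Polynomial

section EntryPoly

variable {R : Type*} [CommSemiring R] {ι : Type*} [Fintype ι] [DecidableEq ι]

/-- The scalar polynomial `f_{ij}` formed from the `(i, j)`-entries of the coefficients of `f`. -/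
noncomputable def entryPoly (f : (Matrix ι ι R)[X]) (i j : ι) : R[X] :=
  ∑ k ∈ f.support, C (f.coeff k i j) * X ^ k

theorem aeval_entryPoly_apply (f : (Matrix ι ι R)[X]) (M : Matrix ι ι R) (i j u v : ι) :
    aeval M (entryPoly f i j) u v = ∑ k ∈ f.support, f.coeff k i j * (M ^ k) u v := by
  simp [entryPoly, Matrix.sum_apply, Algebra.algebraMap_eq_smul_one]

theorem eval_apply_eq_sum_aeval_entryPoly (f : (Matrix ι ι R)[X]) (M : Matrix ι ι R) (a b : ι) :
    f.eval M a b = ∑ l, aeval M (entryPoly f a l) l b := by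
  simp only [eval_eq_sum, Polynomial.sum_def, Matrix.sum_apply, Matrix.mul_apply,
    aeval_entryPoly_apply]
  exact Finset.sum_comm

theorem entryPoly_eq_zero_of_lt [LinearOrder ι] {f : (Matrix ι ι R)[X]}
    (hf : ∀ k, (f.coeff k).BlockTriangular id) {a l : ι} (hla : l < a) : entryPoly f a l = 0 :=
  Finset.sum_eq_zero fun k _ => by rw [hf k hla, map_zero, zero_mul]

end EntryPoly

open Matrix

variable {R : Type*} [CommRing R] {S : Set R} {J : AddSubgroup R}

def MapsTriangularTo (S : Set R) (J : AddSubgroup R) (m : ℕ) (g : R[X]) : Prop :=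
  ∀ C : Matrix (Fin m) (Fin m) R, C.BlockTriangular id → (∀ a b, C a b ∈ S) →
    ∀ a b, aeval C g a b ∈ J

theorem MapsTriangularTo.aeval_apply_mem {n l : ℕ} {g : R[X]}
    (hg : MapsTriangularTo S J (n - l) g) {C : Matrix (Fin n) (Fin n) R}
    (hC : C.BlockTriangular id) (hCS : ∀ a b, C a b ∈ S) {u v : Fin n} (hu : l ≤ u) :
    aeval C g u v ∈ J := by
  rcases lt_or_ge v u with hvu | huv
  · rw [hC.aeval g hvu]
    exact zero_mem J
  have h : l + (n - l) = n := by omega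
  obtain ⟨p, rfl⟩ : ∃ p, Fin.natAddLE l h.le p = u := ⟨⟨u - l, by omega⟩, Fin.ext (by simp; omega)⟩
  obtain ⟨q, rfl⟩ : ∃ q, Fin.natAddLE l h.le q = v :=
    ⟨⟨v - l, by simp [Fin.le_def] at huv; omega⟩, Fin.ext (by simp [Fin.le_def] at huv ⊢; omega)⟩
  rw [hC.aeval_apply_natAddLE h]
  exact hg _ (hC.submatrix_of_strictMono (Fin.strictMono_natAddLE _ _)) (fun _ _ => hCS _ _) p q

variable {n : ℕ} {f : (Matrix (Fin n) (Fin n) R)[X]}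

theorem eval_apply_mem_of_mapsTriangularTo (hf : ∀ k, (f.coeff k).BlockTriangular id)
    (h : ∀ i j : Fin n, i ≤ j → MapsTriangularTo S J (n - j) (entryPoly f i j))
    {C : Matrix (Fin n) (Fin n) R} (hC : C.BlockTriangular id) (hCS : ∀ a b, C a b ∈ S)
    (a b : Fin n) : f.eval C a b ∈ J := by
  rw [eval_apply_eq_sum_aeval_entryPoly]
  refine sum_mem fun l _ => ?_
  rcases lt_or_ge l a with hla | hal
  · rw [entryPoly_eq_zero_of_lt hf hla, map_zero]
    exact zero_mem J
  · exact (h a l hal).aeval_apply_mem hC hCS le_rfl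

section Necessity

variable (hmem : ∀ C : Matrix (Fin n) (Fin n) R, C.BlockTriangular id → (∀ a b, C a b ∈ S) →
  ∀ a b, f.eval C a b ∈ J)
include hmem

theorem aeval_entryPoly_apply_mem_of_row_eq_zero {j : Fin n}
    (ih : ∀ l, j < l → ∀ i, MapsTriangularTo S J (n - l) (entryPoly f i l))
    {C : Matrix (Fin n) (Fin n) R} (hC : C.BlockTriangular id) (hCS : ∀ a b, C a b ∈ S)
    (hrow : ∀ l < j, ∀ w, C l w = 0) (i : Fin n) {v : Fin n} (hv : j ≤ v) :
    aeval C (entryPoly f i j) j v ∈ J := by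
  have hsum := eval_apply_eq_sum_aeval_entryPoly f C i v
  rw [← Finset.add_sum_erase _ _ (Finset.mem_univ j)] at hsum
  rw [eq_sub_of_add_eq hsum.symm]
  refine sub_mem (hmem C hC hCS i v) (sum_mem fun l hl => ?_)
  rcases lt_or_gt_of_ne (Finset.ne_of_mem_erase hl) with hlj | hjl
  · rw [aeval_apply_eq_zero_of_row_eq_zero (hrow l hlj) (hlj.trans_le hv).ne]
    exact zero_mem J
  · exact (ih l hjl i).aeval_apply_mem hC hCS le_rfl

theorem mapsTriangularTo_entryPoly (hS : 0 ∈ S) (j i : Fin n) :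
    MapsTriangularTo S J (n - j) (entryPoly f i j) := by
  induction j using WellFoundedGT.induction generalizing i with
  | _ j ih =>
  intro D hD hDS a b
  rcases lt_or_ge b a with hba | hab
  · rw [hD.aeval _ hba]
    exact zero_mem J
  replace hab : (a : ℕ) ≤ b := hab
  have ha : a + (n - j - a) = n - j := by omega
  have hj : j + (n - j - a) ≤ n := by omega
  set e := Fin.natAddLE j hj
  -- the trailing block of `D` from `a` on, placed at `j` in an otherwise zero matrix
  set E := extendByZero e (D.submatrix (Fin.natAddLE a ha.le) (Fin.natAddLE a ha.le))
  have he : StrictMono e := Fin.strictMono_natAddLE _ _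
  let p : Fin (n - j - a) := ⟨0, by omega⟩
  let q : Fin (n - j - a) := ⟨b - a, by omega⟩
  have hpa : Fin.natAddLE a ha.le p = a := Fin.ext (by simp [p])
  have hqb : Fin.natAddLE a ha.le q = b := Fin.ext (by simp [q]; omega)
  have hEa : aeval D (entryPoly f i j) a b = aeval E (entryPoly f i j) (e p) (e q) := by
    rw [aeval_extendByZero_apply_apply he.injective, ← hD.aeval_apply_natAddLE ha, hpa, hqb]
  have hpj : e p = j := Fin.ext (by simp [e, p])
  rw [hEa, hpj]
  refine aeval_entryPoly_apply_mem_of_row_eq_zero hmem ih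
    (BlockTriangular.extendByZero he (hD.submatrix_of_strictMono (Fin.strictMono_natAddLE _ _)))
    (extendByZero_apply_mem _ hS (fun _ _ => hDS _ _) he.injective) ?_ i ?_
  · rintro l hl w
    refine extendByZero_apply_of_notMem_range_left _ ?_ w
    rintro ⟨r, rfl⟩
    simp [e, Fin.lt_def] at hl
  · simp [e, Fin.le_def]

end Necessity

end Polynomial

/-- `f ∈ (Tₙ(R))[x]` maps `Tₙ(S)` into `Tₙ(I)` under right substitution iff for all
`1 ≤ i ≤ j ≤ n` the scalar polynomial `f_{ij}` maps `T_{n-j+1}(S)` into `T_{n-j+1}(I)`.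
(With 0-indexed `j : Fin n` the size `n-j+1` becomes `n - j`.) -/
theorem stmt13 (n : ℕ) (R : Type*) [CommRing R] (S : Subring R) (I : Ideal S)
    (f : Polynomial (Matrix (Fin n) (Fin n) R))
    (hf : ∀ k, (f.coeff k).BlockTriangular id) :
    (∀ C : Matrix (Fin n) (Fin n) R, C.BlockTriangular id → (∀ a b, C a b ∈ S) →
        (f.eval C).BlockTriangular id ∧
          ∀ a b : Fin n, ∃ s ∈ I, (s : R) = f.eval C a b)
    ↔ ∀ i j : Fin n, i ≤ j →
        ∀ C : Matrix (Fin (n - (j : ℕ))) (Fin (n - (j : ℕ))) R, C.BlockTriangular id →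
          (∀ a b, C a b ∈ S) →
          (Polynomial.aeval C
              (∑ k ∈ f.support, Polynomial.C (f.coeff k i j) * Polynomial.X ^ k)).BlockTriangular id ∧
            ∀ a b, ∃ s ∈ I, (s : R) =
              (Polynomial.aeval C
                (∑ k ∈ f.support, Polynomial.C (f.coeff k i j) * Polynomial.X ^ k)) a b := by
  let J : AddSubgroup R := I.toAddSubgroup.map S.subtype.toAddMonoidHom
  constructor
  · intro h i j _ C hC hCS
    exact ⟨hC.aeval _, Polynomial.mapsTriangularTo_entryPoly (S := S) (J := J)
      (fun C hC hCS => (h C hC hCS).2) S.zero_mem j i C hC hCS⟩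
  · intro h C hC hCS
    exact ⟨hC.eval hf, Polynomial.eval_apply_mem_of_mapsTriangularTo (S := S) (J := J) hf
      (fun i j hij C hC hCS => (h i j hij C hC hCS).2) hC hCS⟩
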